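/- Let (D,d) be a noncomplete rectifiably connected metric space that is length a-John with center x₀. Then for every x₁ ∈ D there is a curve α joining x₁ to x₀ such that α is a diameter a-carrot arc (diam(α[x₁,z]) ≤ a·d(z) for all z ∈ α) and α satisfies the φ-natural condition diam_k(α[x₁,y]) ≤ φ(diam(α[x₁,y]) / dist(α[x₁,y], ∂D)) for all y ∈ α, where φ(t) = b₁ log(1+t) + b₂ with b₁, b₂ depending only on a. -/

import Mathlib

open Set Metric ENNReal

noncomputable section

variable {X : Type*} [MetricSpace X] {Y : Type*} [MetricSpace Y]

/-- Distance from a point `z` to the boundary of `D`, modeled as the distance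
to the complement of `D`. -/
def bdist (D : Set X) (z : X) : ℝ := Metric.infDist z Dᶜ

/-- Distance from a set `A` to the boundary of `D`. -/
def setBdist (D A : Set X) : ℝ := sInf (bdist D '' A)

/-- Quasihyperbolic length (variation) of `f` over the parameter set `s`, the
discretized version of `∫_γ |dz| / dist(z, ∂D)`. -/
def qhVariationOn (D : Set X) (f : ℝ → X) (s : Set ℝ) : ℝ≥0∞ :=
  ⨆ p : ℕ × { u : ℕ → ℝ // Monotone u ∧ ∀ i, u i ∈ s },
    ∑ i ∈ Finset.range p.1,
      edist (f (p.2.1 (i + 1))) (f (p.2.1 i)) /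
        max (ENNReal.ofReal (bdist D (f (p.2.1 i))))
            (ENNReal.ofReal (bdist D (f (p.2.1 (i + 1)))))

/-- `f : [0,1] → D` is a curve in `D` from `x` to `y`. -/
structure IsCurveIn (D : Set X) (f : ℝ → X) (x y : X) : Prop where
  cont : ContinuousOn f (Icc 0 1)
  mem : ∀ t ∈ Icc (0 : ℝ) 1, f t ∈ D
  source : f 0 = x
  target : f 1 = y

/-- Every pair of points of `D` can be joined by a rectifiable curve in `D`. -/
def RectifiablyConnected (D : Set X) : Prop :=
  ∀ x ∈ D, ∀ y ∈ D, ∃ f : ℝ → X, IsCurveIn D f x y ∧ eVariationOn f (Icc 0 1) < ⊤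

/-- The quasihyperbolic distance in `D`. -/
def qhDist (D : Set X) (x y : X) : ℝ≥0∞ :=
  ⨅ (f : ℝ → X) (_ : IsCurveIn D f x y ∧ eVariationOn f (Icc 0 1) < ⊤),
    qhVariationOn D f (Icc 0 1)

/-- Diameter of a set `A ⊆ D` with respect to the quasihyperbolic metric of `D`. -/
def qhDiam (D : Set X) (A : Set X) : ℝ≥0∞ := ⨆ x ∈ A, ⨆ y ∈ A, qhDist D x y

/-- `D` is a length `a`-John space with center `x₀`: every point can be joined to `x₀`
by an `a`-carrot arc, i.e. `ℓ(α[x,z]) ≤ a · dist(z, ∂D)` for every `z` on the arc. -/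
def IsLengthJohn (D : Set X) (a : ℝ) (x₀ : X) : Prop :=
  ∀ x ∈ D, ∃ f : ℝ → X, IsCurveIn D f x x₀ ∧
    ∀ t ∈ Icc (0 : ℝ) 1, eVariationOn f (Icc 0 t) ≤ ENNReal.ofReal (a * bdist D (f t))

/-- `D` is locally `(lam, c)`-quasiconvex: any two points of `B(x, lam·dist(x,∂D))`
can be joined by a `c`-quasiconvex curve in `D`. -/
def LocQuasiconvex (D : Set X) (lam c : ℝ) : Prop :=
  ∀ x ∈ D, ∀ y ∈ D, ∀ z ∈ D,
    dist y x < lam * bdist D x → dist z x < lam * bdist D x →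
      ∃ f : ℝ → X, IsCurveIn D f y z ∧
        eVariationOn f (Icc 0 1) ≤ ENNReal.ofReal (c * dist y z)

/-- `η` is a quasisymmetry control function: an increasing self-homeomorphism of `[0, ∞)`. -/
structure QSControl (η : ℝ → ℝ) : Prop where
  mono : StrictMonoOn η (Ici 0)
  cont : ContinuousOn η (Ici 0)
  zero : η 0 = 0
  surj : ∀ s : ℝ, 0 ≤ s → ∃ t : ℝ, 0 ≤ t ∧ η t = s

/-- `f` is `η`-quasisymmetric on `D`. -/
def IsQSOn (f : X → Y) (D : Set X) (η : ℝ → ℝ) : Prop :=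
  ∀ x ∈ D, ∀ a ∈ D, ∀ b ∈ D, ∀ t : ℝ, 0 ≤ t →
    dist x a ≤ t * dist x b → dist (f x) (f a) ≤ η t * dist (f x) (f b)

/-- `f` is a homeomorphism from `D` onto `D'` with inverse `g`. -/
def IsHomeoOn (f : X → Y) (g : Y → X) (D : Set X) (D' : Set Y) : Prop :=
  ContinuousOn f D ∧ ContinuousOn g D' ∧ MapsTo f D D' ∧ MapsTo g D' D ∧ InvOn g f D D'

/-!
We keep the John arc `f` itself; write `ℓ(r)` for the length of `f` on `[0, r]` and `d = bdist D`.
For `s ≤ r` the distance to the boundary is `1`-Lipschitz along the arc and the carrot condition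
gives `ℓ(r) ≤ a d(f r)`, so `ℓ(r) + ℓ(s) + d(f s) ≤ (2a+1) d(f r)`. Hence each step of a
quasihyperbolic sum along `f[s, s']` is bounded by the increment of the potential
`(2a+1) log (ℓ + ℓ(s) + d(f s))`, and the sums telescope to at most
`(2a+1) log ((2a+1) d(f s') / d(f s))`. Since `d(f s') ≤ d(f s) + diam` and
`d(f s) ≥ setBdist`, this is the `φ`-natural bound with `b₁ = 2a+1`, `b₂ = (2a+1) log (2a+1)`.
-/

lemma Real.sub_div_le_log_sub_log {u w : ℝ} (hu : 0 < u) (hw : 0 < w) :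
    (w - u) / w ≤ Real.log w - Real.log u := by
  have h := Real.one_sub_inv_le_log_of_pos (div_pos hw hu)
  rwa [inv_div, Real.log_div hw.ne' hu.ne', ← div_self hw.ne', ← sub_div] at h

lemma dist_le_variationOnFromTo_sub {α E : Type*} [LinearOrder α] [PseudoMetricSpace E]
    {f : α → E} {s : Set α} (hf : LocallyBoundedVariationOn f s) {a x y : α} (ha : a ∈ s)
    (hx : x ∈ s) (hy : y ∈ s) (hxy : x ≤ y) :
    dist (f x) (f y) ≤ variationOnFromTo f s a y - variationOnFromTo f s a x := by
  rw [variationOnFromTo.sub_right hf ha hy hx, variationOnFromTo.eq_of_le f s hxy, dist_edist]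
  exact ENNReal.toReal_mono (hf x y hx hy)
    (eVariationOn.edist_le f ⟨hx, le_rfl, hxy⟩ ⟨hy, hxy, le_rfl⟩)

lemma ENNReal.sum_le_ofReal_sub_of_monotone {e : ℕ → ℝ≥0∞} {g : ℕ → ℝ} (hg : Monotone g)
    (he : ∀ i, e i ≤ ENNReal.ofReal (g (i + 1) - g i)) (n : ℕ) :
    ∑ i ∈ Finset.range n, e i ≤ ENNReal.ofReal (g n - g 0) :=
  calc ∑ i ∈ Finset.range n, e i
      ≤ ∑ i ∈ Finset.range n, ENNReal.ofReal (g (i + 1) - g i) := Finset.sum_le_sum fun i _ ↦ he i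
    _ = ENNReal.ofReal (g n - g 0) := by
      rw [← ENNReal.ofReal_sum_of_nonneg fun i _ ↦ sub_nonneg.2 (hg i.le_succ),
        Finset.sum_range_sub]

lemma ENNReal.sum_le_ofReal_sub_of_monotone_or_antitone {c : ℝ → ℝ → ℝ≥0∞}
    (hc : ∀ x y, c x y = c y x) {F : ℝ → ℝ} {s s' : ℝ} (hF : MonotoneOn F (Icc s s'))
    (hcF : ∀ x ∈ Icc s s', ∀ y ∈ Icc s s', x ≤ y → c x y ≤ ENNReal.ofReal (F y - F x))
    {v : ℕ → ℝ} (hv : Monotone v ∨ Antitone v) (hvs : ∀ i, v i ∈ Icc s s') (n : ℕ) :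
    ∑ i ∈ Finset.range n, c (v i) (v (i + 1)) ≤ ENNReal.ofReal (F s' - F s) := by
  have hss' : s ≤ s' := (hvs 0).1.trans (hvs 0).2
  have hFs : ∀ i, F s ≤ F (v i) := fun i ↦ hF (left_mem_Icc.2 hss') (hvs i) (hvs i).1
  have hFs' : ∀ i, F (v i) ≤ F s' := fun i ↦ hF (hvs i) (right_mem_Icc.2 hss') (hvs i).2
  rcases hv with hv | hv
  · refine (sum_le_ofReal_sub_of_monotone (g := fun i ↦ F (v i))
      (fun i j hij ↦ hF (hvs i) (hvs j) (hv hij))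
      (fun i ↦ hcF _ (hvs i) _ (hvs _) (hv i.le_succ)) n).trans (ofReal_le_ofReal ?_)
    linarith [hFs 0, hFs' n]
  · refine (sum_le_ofReal_sub_of_monotone (g := fun i ↦ -F (v i))
      (fun i j hij ↦ neg_le_neg (hF (hvs j) (hvs i) (hv hij)))
      (fun i ↦ ?_) n).trans (ofReal_le_ofReal ?_)
    · rw [hc, neg_sub_neg]
      exact hcF _ (hvs _) _ (hvs i) (hv i.le_succ)
    · linarith [hFs n, hFs' 0]

lemma bdist_pos {D : Set X} (hD : IsOpen D) (hne : Dᶜ.Nonempty) {z : X} (hz : z ∈ D) :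
    0 < bdist D z :=
  (hD.isClosed_compl.notMem_iff_infDist_pos hne).1 fun h ↦ h hz

lemma setBdist_le_bdist {D A : Set X} {z : X} (hz : z ∈ A) : setBdist D A ≤ bdist D z :=
  csInf_le ⟨0, by rintro _ ⟨w, -, rfl⟩; exact infDist_nonneg⟩ (mem_image_of_mem _ hz)

lemma setBdist_pos {D A : Set X} (hD : IsOpen D) (hne : Dᶜ.Nonempty) (hA : IsCompact A)
    (hAne : A.Nonempty) (hAD : A ⊆ D) : 0 < setBdist D A := by
  obtain ⟨z, hz, hzA⟩ :=
    (hA.image (f := bdist D) (continuous_infDist_pt Dᶜ)).sInf_mem (hAne.image _)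
  rw [setBdist, ← hzA]
  exact bdist_pos hD hne (hAD hz)

lemma bdist_div_bdist_le {D A : Set X} (hA : Bornology.IsBounded A) {x y : X} (hx : x ∈ A)
    (hy : y ∈ A) (hβ : 0 < setBdist D A) :
    bdist D y / bdist D x ≤ 1 + diam A / setBdist D A := by
  have hβx : setBdist D A ≤ bdist D x := setBdist_le_bdist hx
  have hx₀ : 0 < bdist D x := hβ.trans_le hβx
  calc bdist D y / bdist D x ≤ (bdist D x + diam A) / bdist D x :=
        div_le_div_of_nonneg_right (infDist_le_infDist_add_dist.trans <|
          add_le_add_right (dist_le_diam_of_mem hA hy hx) _) hx₀.le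
    _ = 1 + diam A / bdist D x := by rw [add_div, div_self hx₀.ne']
    _ ≤ 1 + diam A / setBdist D A := by gcongr

/-- The summand of `qhVariationOn`. -/
def qhStep (D : Set X) (x y : X) : ℝ≥0∞ :=
  edist y x / max (ENNReal.ofReal (bdist D x)) (ENNReal.ofReal (bdist D y))

lemma qhStep_comm (D : Set X) (x y : X) : qhStep D x y = qhStep D y x := by
  rw [qhStep, qhStep, edist_comm, max_comm]

lemma qhStep_le_mul_log_sub_log {D : Set X} {x y : X} {u w c : ℝ} (hu : 0 < u)
    (hdist : dist x y ≤ w - u) (hw : w ≤ c * bdist D y) (hc : 0 ≤ c) :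
    qhStep D x y ≤ ENNReal.ofReal (c * Real.log w - c * Real.log u) := by
  have hwu : 0 ≤ w - u := dist_nonneg.trans hdist
  have hw₀ : 0 < w := by linarith
  have hdy : 0 < bdist D y := pos_of_mul_pos_right (hw₀.trans_le hw) hc
  calc qhStep D x y ≤ ENNReal.ofReal (w - u) / ENNReal.ofReal (bdist D y) :=
        ENNReal.div_le_div (by rw [edist_comm, edist_dist]; exact ofReal_le_ofReal hdist)
          (le_max_right _ _)
    _ = ENNReal.ofReal ((w - u) / bdist D y) := (ofReal_div_of_pos hdy).symm
    _ ≤ ENNReal.ofReal (c * Real.log w - c * Real.log u) := ofReal_le_ofReal <| calc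
      (w - u) / bdist D y = (w - u) / w * (w / bdist D y) := by field_simp
      _ ≤ (w - u) / w * c :=
        mul_le_mul_of_nonneg_left ((div_le_iff₀ hdy).2 hw) (div_nonneg hwu hw₀.le)
      _ ≤ (Real.log w - Real.log u) * c :=
        mul_le_mul_of_nonneg_right (Real.sub_div_le_log_sub_log hu hw₀) hc
      _ = c * Real.log w - c * Real.log u := by ring

lemma qhDist_le_of_forall_sum_qhStep_le {D : Set X} {f : ℝ → X} (hf : ContinuousOn f (Icc 0 1))
    (hfD : ∀ t ∈ Icc (0 : ℝ) 1, f t ∈ D) (hvar : BoundedVariationOn f (Icc 0 1)) {p q : ℝ}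
    (hp : p ∈ Icc (0 : ℝ) 1) (hq : q ∈ Icc (0 : ℝ) 1) {B : ℝ≥0∞}
    (hB : ∀ v : ℕ → ℝ, (Monotone v ∨ Antitone v) → (∀ i, v i ∈ uIcc p q) → ∀ n,
      ∑ i ∈ Finset.range n, qhStep D (f (v i)) (f (v (i + 1))) ≤ B) :
    qhDist D (f p) (f q) ≤ B := by
  let φ : ℝ → ℝ := AffineMap.lineMap p q
  have hφ : MapsTo φ (Icc 0 1) (uIcc p q) :=
    (convex_uIcc p q).mapsTo_lineMap left_mem_uIcc right_mem_uIcc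
  have hφ01 : MapsTo φ (Icc 0 1) (Icc 0 1) := hφ.mono_right (uIcc_subset_Icc hp hq)
  have hφmono : Monotone φ ∨ Antitone φ :=
    (le_total p q).imp AffineMap.lineMap_mono AffineMap.lineMap_anti
  have hcurve : IsCurveIn D (f ∘ φ) (f p) (f q) :=
    ⟨hf.comp AffineMap.lineMap_continuous.continuousOn hφ01, fun t ht ↦ hfD _ (hφ01 ht),
      by simp [φ], by simp [φ]⟩
  have hvarφ : eVariationOn (f ∘ φ) (Icc 0 1) < ⊤ := by
    refine lt_of_le_of_lt ?_ hvar.lt_top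
    rcases hφmono with h | h
    · exact eVariationOn.comp_le_of_monotoneOn f φ (h.monotoneOn _) hφ01
    · exact eVariationOn.comp_le_of_antitoneOn f φ (h.antitoneOn _) hφ01
  refine (iInf₂_le (f ∘ φ) ⟨hcurve, hvarφ⟩).trans (iSup_le fun ⟨n, u, hu, hu01⟩ ↦ ?_)
  exact hB (φ ∘ u) (hφmono.imp (·.comp hu) (·.comp_monotone hu)) (fun i ↦ hφ (hu01 i)) n

def IsLengthCarrot (D : Set X) (a : ℝ) (f : ℝ → X) : Prop :=
  ∀ t ∈ Icc (0 : ℝ) 1, eVariationOn f (Icc 0 t) ≤ ENNReal.ofReal (a * bdist D (f t))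

namespace IsLengthCarrot

variable {D : Set X} {a : ℝ} {f : ℝ → X}

lemma boundedVariationOn (hf : IsLengthCarrot D a f) : BoundedVariationOn f (Icc 0 1) :=
  ((hf 1 (right_mem_Icc.2 zero_le_one)).trans_lt ofReal_lt_top).ne

lemma ediam_image_Icc_le (hf : IsLengthCarrot D a f) {t : ℝ} (ht : t ∈ Icc (0 : ℝ) 1) :
    ediam (f '' Icc 0 t) ≤ ENNReal.ofReal (a * bdist D (f t)) := by
  refine ediam_le ?_
  rintro _ ⟨p, hp, rfl⟩ _ ⟨q, hq, rfl⟩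
  exact (eVariationOn.edist_le f hp hq).trans (hf t ht)

lemma variationOnFromTo_le (hf : IsLengthCarrot D a f) (ha : 0 ≤ a) {r : ℝ}
    (hr : r ∈ Icc (0 : ℝ) 1) : variationOnFromTo f (Icc 0 1) 0 r ≤ a * bdist D (f r) := by
  rw [variationOnFromTo.eq_of_le _ _ hr.1, inter_eq_right.2 (Icc_subset_Icc_right hr.2)]
  exact toReal_le_of_le_ofReal (mul_nonneg ha infDist_nonneg) (hf r hr)

lemma add_le_mul_bdist (hf : IsLengthCarrot D a f) (ha : 0 ≤ a) {s r : ℝ} (hs : 0 ≤ s)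
    (hsr : s ≤ r) (hr : r ≤ 1) :
    variationOnFromTo f (Icc 0 1) 0 r + (variationOnFromTo f (Icc 0 1) 0 s + bdist D (f s)) ≤
      (2 * a + 1) * bdist D (f r) := by
  have hdist := dist_le_variationOnFromTo_sub hf.boundedVariationOn.locallyBoundedVariationOn
    (left_mem_Icc.2 zero_le_one) ⟨hs, hsr.trans hr⟩ ⟨hs.trans hsr, hr⟩ hsr
  have hbdist : bdist D (f s) ≤ bdist D (f r) + dist (f s) (f r) := infDist_le_infDist_add_dist
  have hcarrot := hf.variationOnFromTo_le ha ⟨hs.trans hsr, hr⟩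
  linarith

lemma sum_qhStep_le (hf : IsLengthCarrot D a f) (ha : 0 ≤ a) {s s' : ℝ} (hs : 0 ≤ s)
    (hs' : s' ≤ 1) (hds : 0 < bdist D (f s)) {v : ℕ → ℝ} (hv : Monotone v ∨ Antitone v)
    (hvs : ∀ i, v i ∈ Icc s s') (n : ℕ) :
    ∑ i ∈ Finset.range n, qhStep D (f (v i)) (f (v (i + 1))) ≤
      ENNReal.ofReal ((2 * a + 1) * Real.log ((2 * a + 1) * bdist D (f s') / bdist D (f s))) := by
  have hss' : s ≤ s' := (hvs 0).1.trans (hvs 0).2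
  have hbv := hf.boundedVariationOn.locallyBoundedVariationOn
  set L := variationOnFromTo f (Icc 0 1) 0
  set K := L s + bdist D (f s)
  have hIcc : ∀ r ∈ Icc s s', r ∈ Icc (0 : ℝ) 1 := fun r hr ↦ ⟨hs.trans hr.1, hr.2.trans hs'⟩
  have hK : ∀ r ∈ Icc s s', bdist D (f s) ≤ L r + K := fun r hr ↦ by
    linarith [variationOnFromTo.nonneg_of_le f (Icc 0 1) (hIcc r hr).1,
      variationOnFromTo.nonneg_of_le f (Icc 0 1) hs]
  have hkey : ∀ r ∈ Icc s s', L r + K ≤ (2 * a + 1) * bdist D (f r) := fun r hr ↦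
    hf.add_le_mul_bdist ha hs hr.1 (hr.2.trans hs')
  have hL : MonotoneOn L (Icc s s') :=
    (variationOnFromTo.monotoneOn hbv (left_mem_Icc.2 zero_le_one)).mono fun r hr ↦ hIcc r hr
  have hF : MonotoneOn (fun r ↦ (2 * a + 1) * Real.log (L r + K)) (Icc s s') :=
    fun x hx y hy hxy ↦ mul_le_mul_of_nonneg_left (Real.log_le_log (hds.trans_le (hK x hx))
      (add_le_add_left (hL hx hy hxy) K)) (by linarith)
  refine (ENNReal.sum_le_ofReal_sub_of_monotone_or_antitone (fun x y ↦ qhStep_comm D (f x) (f y))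
    hF (fun x hx y hy hxy ↦ qhStep_le_mul_log_sub_log (hds.trans_le (hK x hx)) ?_ (hkey y hy)
      (by linarith)) hv hvs n).trans (ofReal_le_ofReal ?_)
  · rw [add_sub_add_right_eq_sub]
    exact dist_le_variationOnFromTo_sub hbv (left_mem_Icc.2 zero_le_one) (hIcc x hx) (hIcc y hy) hxy
  · have hs₀ := hK s (left_mem_Icc.2 hss')
    have hs'₀ := hK s' (right_mem_Icc.2 hss')
    rw [← mul_sub, ← Real.log_div (hds.trans_le hs'₀).ne' (hds.trans_le hs₀).ne']
    refine mul_le_mul_of_nonneg_left (Real.log_le_log (div_pos (hds.trans_le hs'₀)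
      (hds.trans_le hs₀)) (div_le_div₀ ?_ (hkey s' (right_mem_Icc.2 hss')) hds hs₀)) (by linarith)
    linarith [hkey s' (right_mem_Icc.2 hss')]

lemma qhDiam_image_Icc_le (hf : IsLengthCarrot D a f) (ha : 0 ≤ a) (hD : IsOpen D)
    (hne : Dᶜ.Nonempty) (hcont : ContinuousOn f (Icc 0 1)) (hfD : ∀ t ∈ Icc (0 : ℝ) 1, f t ∈ D)
    {t : ℝ} (ht : t ∈ Icc (0 : ℝ) 1) :
    qhDiam D (f '' Icc 0 t) ≤ ENNReal.ofReal ((2 * a + 1) *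
      Real.log (1 + diam (f '' Icc 0 t) / setBdist D (f '' Icc 0 t)) +
        (2 * a + 1) * Real.log (2 * a + 1)) := by
  set T := f '' Icc 0 t
  have hsub : Icc 0 t ⊆ Icc (0 : ℝ) 1 := Icc_subset_Icc_right ht.2
  have hT : IsCompact T := isCompact_Icc.image_of_continuousOn (hcont.mono hsub)
  have hTD : T ⊆ D := by
    rintro _ ⟨p, hp, rfl⟩
    exact hfD p (hsub hp)
  have hβ : 0 < setBdist D T :=
    setBdist_pos hD hne hT ⟨f 0, mem_image_of_mem f (left_mem_Icc.2 ht.1)⟩ hTD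
  refine iSup₂_le ?_
  rintro _ ⟨p, hp, rfl⟩
  refine iSup₂_le ?_
  rintro _ ⟨q, hq, rfl⟩
  refine qhDist_le_of_forall_sum_qhStep_le hcont hfD hf.boundedVariationOn (hsub hp) (hsub hq)
    fun v hv hvpq n ↦ ?_
  have hs : min p q ∈ Icc 0 t := ⟨le_min hp.1 hq.1, (min_le_left p q).trans hp.2⟩
  have hs' : max p q ∈ Icc 0 t := ⟨hp.1.trans (le_max_left p q), max_le hp.2 hq.2⟩
  have hds := bdist_pos hD hne (hTD (mem_image_of_mem f hs))
  refine (hf.sum_qhStep_le ha hs.1 (hsub hs').2 hds hv hvpq n).trans (ofReal_le_ofReal ?_)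
  have hratio := bdist_div_bdist_le hT.isBounded (mem_image_of_mem f hs)
    (mem_image_of_mem f hs') hβ
  have hds' := bdist_pos hD hne (hTD (mem_image_of_mem f hs'))
  calc (2 * a + 1) * Real.log ((2 * a + 1) * bdist D (f (max p q)) / bdist D (f (min p q)))
      ≤ (2 * a + 1) * Real.log ((2 * a + 1) * (1 + diam T / setBdist D T)) := by
        rw [mul_div_assoc]
        gcongr
    _ = _ := by
      rw [Real.log_mul (by positivity) (by positivity), mul_add, add_comm]

end IsLengthCarrot

end

/-- If `D` is length `a`-John with center `x₀`, then, with
`φ(t) = b₁ log(1+t) + b₂` for constants `b₁, b₂` depending only on `a`, every `x₁ ∈ D`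
joins `x₀` by a diameter `a`-carrot arc satisfying the `φ`-natural condition. -/
theorem exists_natural_diameter_carrot_of_isLengthJohn (a : ℝ) (ha : 1 ≤ a) :
    ∃ b₁ b₂ : ℝ, 0 < b₁ ∧ 0 < b₂ ∧
      ∀ (X : Type) [MetricSpace X], ∀ D : Set X, IsOpen D → Dᶜ.Nonempty →
        RectifiablyConnected D → ∀ x₀ ∈ D, IsLengthJohn D a x₀ →
        ∀ x₁ ∈ D, ∃ f : ℝ → X, IsCurveIn D f x₁ x₀ ∧
          (∀ t ∈ Icc (0 : ℝ) 1,
            EMetric.diam (f '' Icc 0 t) ≤ ENNReal.ofReal (a * bdist D (f t))) ∧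
          ∀ t ∈ Icc (0 : ℝ) 1,
            qhDiam D (f '' Icc 0 t) ≤ ENNReal.ofReal
              (b₁ * Real.log (1 + (EMetric.diam (f '' Icc 0 t)).toReal /
                setBdist D (f '' Icc 0 t)) + b₂) := by
  refine ⟨2 * a + 1, (2 * a + 1) * Real.log (2 * a + 1), by linarith,
    mul_pos (by linarith) (Real.log_pos (by linarith)), ?_⟩
  intro X _ D hD hne _ x₀ _ hJohn x₁ hx₁
  obtain ⟨f, hf, hcarrot⟩ := hJohn x₁ hx₁
  have hcarrot : IsLengthCarrot D a f := hcarrot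
  exact ⟨f, hf, fun t ht ↦ hcarrot.ediam_image_Icc_le ht,
    fun t ht ↦ hcarrot.qhDiam_image_Icc_le (by linarith) hD hne hf.cont hf.mem ht⟩
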